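/- arXiv:1401.5613 — 2 statements merged into one kernel-verified Lean document; each statement's English description precedes it below -/
import Mathlib

section
/- In the change-point model below, ν-almost everywhere the conditional probability of {θ > n} given the full observation σ-algebra 𝓕_n satisfies ν(θ > n | 𝓕_n) = (1 − π) pⁿ L₀(x, X₁, …, X_n) / S(x, X₁, …, X_n); equivalently, 1 − Π_n = (1 − π) pⁿ L₀ / S where Π_n := ν(θ ≤ n | 𝓕_n). -/
open MeasureTheory Finset
open scoped NNReal ENNReal

noncomputable section

/-- `L_m(x_k, …, x_N) = ∏_{r=k+1}^{N-m} f⁰(x_{r-1}, x_r) · ∏_{r=N-m+1}^{N} f¹(x_{r-1}, x_r)`. -/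
def Lfn {E : Type*} (f0 f1 : E → E → ℝ≥0) (k N m : ℕ) (xv : ℕ → E) : ℝ≥0 :=
  (∏ r ∈ Finset.Icc (k + 1) (N - m), f0 (xv (r - 1)) (xv r)) *
    ∏ r ∈ Finset.Icc (N - m + 1) N, f1 (xv (r - 1)) (xv r)

/-- Density `ℓ_j(x₀,…,x_n)` of the observations given the change point `θ = j`:
`ℓ_j = L_{n-j+1}` if `1 ≤ j ≤ n`, `ℓ₀ = L_n`, `ℓ_j = L₀` for `j > n`. -/
def ellDens {E : Type*} (f0 f1 : E → E → ℝ≥0) (n j : ℕ) (xv : ℕ → E) : ℝ≥0 :=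
  if j = 0 then Lfn f0 f1 0 n n xv
  else if j ≤ n then Lfn f0 f1 0 n (n - j + 1) xv
  else Lfn f0 f1 0 n 0 xv

/-- Extension of the observations `(x₁, …, x_n)` to a full trajectory `(x₀, x₁, …, x_n)`
with `x₀ = x` (entries beyond `n` are irrelevant and set to `x`). -/
def extvec {E : Type*} (n : ℕ) (x : E) (xs : Fin n → E) : ℕ → E := fun r =>
  if h : 1 ≤ r ∧ r ≤ n then xs ⟨r - 1, by omega⟩ else x

/-- The prior distribution of the change point: `ρ 0 = π`, `ρ j = (1-π) p^(j-1) (1-p)`, `j ≥ 1`. -/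
def prior (p π : ℝ) (j : ℕ) : ℝ≥0∞ :=
  if j = 0 then ENNReal.ofReal π else ENNReal.ofReal ((1 - π) * p ^ (j - 1) * (1 - p))

/-- The joint law `ν` of `(θ, X₁, …, X_n)` given `X₀ = x`: its restriction to `{j} × Eⁿ` is
`ρ j` times the measure with density `(x₁,…,x_n) ↦ ℓ_j(x, x₁, …, x_n)` w.r.t. `μ^⊗n`. -/
def nuMeasure {E : Type*} [MeasurableSpace E] (μ : Measure E) (f0 f1 : E → E → ℝ≥0)
    (p π : ℝ) (x : E) (n : ℕ) : Measure (ℕ × (Fin n → E)) :=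
  Measure.sum fun j =>
    prior p π j •
      Measure.map (fun xs => (j, xs))
        ((Measure.pi fun _ : Fin n => μ).withDensity fun xs =>
          (ellDens f0 f1 n j (extvec n x xs) : ℝ≥0∞))

/-- `S(x₀, …, x_m) = π L_m + (1-π)(∑_{i=1}^m p^{i-1} q L_{m-i+1} + p^m L₀)`. -/
def Sfn {E : Type*} (f0 f1 : E → E → ℝ≥0) (p π : ℝ) (m : ℕ) (xv : ℕ → E) : ℝ :=
  π * (Lfn f0 f1 0 m m xv : ℝ) +
    (1 - π) * ((∑ i ∈ Finset.Icc 1 m, p ^ (i - 1) * (1 - p) * (Lfn f0 f1 0 m (m - i + 1) xv : ℝ)) +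
      p ^ m * (Lfn f0 f1 0 m 0 xv : ℝ))

/-- `G_{l+1}(x_k, …, x_{k+l+1}, α) = α L_{l+1} + (1-α)(∑_{i=0}^{l} p^{l-i} q L_{i+1} + p^{l+1} L₀)`. -/
def Gfn {E : Type*} (f0 f1 : E → E → ℝ≥0) (p : ℝ) (k l : ℕ) (xv : ℕ → E) (α : ℝ) : ℝ :=
  α * (Lfn f0 f1 k (k + l + 1) (l + 1) xv : ℝ) +
    (1 - α) *
      ((∑ i ∈ Finset.range (l + 1), p ^ (l - i) * (1 - p) * (Lfn f0 f1 k (k + l + 1) (i + 1) xv : ℝ)) +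
        p ^ (l + 1) * (Lfn f0 f1 k (k + l + 1) 0 xv : ℝ))

/-- The σ-algebra `𝓕_m` generated by the observations `(X₁, …, X_m)`, `m ≤ n`. -/
def Ffil {E : Type*} [MeasurableSpace E] (n m : ℕ) (h : m ≤ n) :
    MeasurableSpace (ℕ × (Fin n → E)) :=
  MeasurableSpace.comap (fun ω => fun i : Fin m => ω.2 (Fin.castLE h i)) inferInstance

end

open MeasureTheory

/-!
Under `ν` the change point `θ` is drawn from `ρ` and, given `θ = j`, the observations have
density `ℓ_j` with respect to `μ^⊗n`. Hence the observations have density `∑ⱼ ρ(j) ℓ_j = S`,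
and jointly with the event `{θ > n}` they have density `∑_{j > n} ρ(j) ℓ_j = (1 - π) pⁿ L₀`,
because `ℓ_j = L₀` for every `j > n` and `ρ` has geometric tail `∑_{j > n} ρ(j) = (1 - π) pⁿ`.
Bayes' formula expresses `ν(θ > n | 𝓕_n)` as the ratio of these two densities.
-/

theorem sigmaFinite_trim_comap {α β : Type*} [MeasurableSpace α] [MeasurableSpace β]
    {μ : Measure α} {f : α → β} (hf : Measurable f) [SigmaFinite (μ.map f)] :
    SigmaFinite (μ.trim hf.comap_le) := by
  refine SigmaFinite.of_map _ (comap_measurable f).aemeasurable ?_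
  convert ‹SigmaFinite (μ.map f)› using 1
  ext B hB
  rw [Measure.map_apply (comap_measurable f) hB, Measure.map_apply hf hB,
    trim_measurableSet_eq _ (comap_measurable f hB)]

theorem condExp_indicator_fst_preimage_ae_eq_div {Θ X : Type*} [MeasurableSpace Θ]
    [MeasurableSpace X] {ν : Measure (Θ × X)} {P : Measure X} [SigmaFinite P] {T : Set Θ}
    (hT : MeasurableSet T) {N D : X → ℝ≥0∞} (hN : Measurable N) (hD : Measurable D)
    (hND : N ≤ D) (hD_top : ∀ x, D x ≠ ∞) (hN_fin : ∫⁻ x, N x ∂P ≠ ∞)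
    (hmarg : ν.map Prod.snd = P.withDensity D)
    (hjoint : (ν.restrict (Prod.fst ⁻¹' T)).map Prod.snd = P.withDensity N) :
    ν[(Prod.fst ⁻¹' T).indicator fun _ => (1 : ℝ) | MeasurableSpace.comap Prod.snd inferInstance]
      =ᵐ[ν] fun ω => (N ω.2 / D ω.2).toReal := by
  have hsnd : Measurable (Prod.snd : Θ × X → X) := measurable_snd
  have hm := hsnd.comap_le
  have : SigmaFinite (ν.map Prod.snd) := hmarg ▸ SigmaFinite.withDensity_of_ne_top' hD_top
  have := sigmaFinite_trim_comap (μ := ν) hsnd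
  have hjoint_apply : ∀ B, MeasurableSet B →
      ν (Prod.fst ⁻¹' T ∩ Prod.snd ⁻¹' B) = ∫⁻ x in B, N x ∂P := fun B hB => by
    rw [← withDensity_apply _ hB, ← hjoint, Measure.map_apply hsnd hB,
      Measure.restrict_apply (hsnd hB), Set.inter_comm]
  have hND_div : ∀ x, N x / D x ≤ 1 := fun x => ENNReal.div_le_of_le_mul (by simpa using hND x)
  have hND_cancel : ∀ x, D x * (N x / D x) = N x := fun x =>
    ENNReal.mul_div_cancel' (fun h => le_antisymm (h ▸ hND x) bot_le)
      (fun h => absurd h (hD_top x))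
  have hNDm : Measurable fun x => N x / D x := hN.div hD
  have hT' : MeasurableSet (Prod.fst ⁻¹' T : Set (Θ × X)) := measurable_fst hT
  have hg_meas : Measurable[MeasurableSpace.comap Prod.snd inferInstance]
      fun ω : Θ × X => (N ω.2 / D ω.2).toReal :=
    (hNDm.ennreal_toReal).comp (comap_measurable Prod.snd)
  refine (ae_eq_condExp_of_forall_setIntegral_eq hm ?_ ?_ ?_ hg_meas.aestronglyMeasurable).symm
  · rw [integrable_indicator_iff hT', integrableOn_const_iff]
    right
    have h := hjoint_apply _ MeasurableSet.univ
    rw [Set.preimage_univ, Set.inter_univ, Measure.restrict_univ] at h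
    exact h ▸ hN_fin.lt_top
  · intro s _ hs
    refine Measure.integrableOn_of_bounded hs.ne (hg_meas.mono hm le_rfl).aestronglyMeasurable
      (M := 1) (ae_of_all _ fun ω => ?_)
    rw [Real.norm_of_nonneg ENNReal.toReal_nonneg]
    exact ENNReal.toReal_le_of_le_ofReal zero_le_one (by simpa using hND_div ω.2)
  · -- on `Prod.snd ⁻¹' B` both integrals equal `∫⁻ x in B, N x ∂P`
    rintro _ ⟨B, hB, rfl⟩ -
    rw [integral_indicator hT', setIntegral_const, smul_eq_mul, mul_one,
      measureReal_restrict_apply hT', measureReal_def, hjoint_apply B hB, integral_toReal]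
    · congr 1
      rw [← setLIntegral_map (f := fun x => N x / D x) hB hNDm hsnd, hmarg,
        setLIntegral_withDensity_eq_setLIntegral_mul _ hD hNDm hB]
      simp only [Pi.mul_apply, hND_cancel]
    · exact (hNDm.comp hsnd).aemeasurable
    · exact ae_of_all _ fun ω => (hND_div ω.2).trans_lt ENNReal.one_lt_top

theorem map_snd_restrict_sum_map_prodMk {ι X : Type*} [MeasurableSpace ι] [Countable ι]
    [MeasurableSpace X] (P : Measure X) (w : ι → ℝ≥0∞) {d : ι → X → ℝ≥0∞}
    (hd : ∀ j, Measurable (d j)) {T : Set ι} (hT : MeasurableSet T) :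
    ((Measure.sum fun j => w j • (P.withDensity (d j)).map (Prod.mk j)).restrict
        (Prod.fst ⁻¹' T)).map Prod.snd =
      P.withDensity fun x => ∑' j, T.indicator w j * d j x := by
  ext B hB
  have hB' : MeasurableSet (Prod.snd ⁻¹' B ∩ Prod.fst ⁻¹' T : Set (ι × X)) :=
    (measurable_snd hB).inter (measurable_fst hT)
  rw [Measure.map_apply measurable_snd hB, Measure.restrict_apply (measurable_snd hB),
    Measure.sum_apply _ hB', withDensity_apply _ hB,
    lintegral_tsum fun j => ((hd j).const_mul _).aemeasurable]
  refine tsum_congr fun j => ?_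
  rw [Measure.smul_apply, Measure.map_apply measurable_prodMk_left hB',
    lintegral_const_mul _ (hd j)]
  by_cases hj : j ∈ T
  · have hpre : Prod.mk j ⁻¹' (Prod.snd ⁻¹' B ∩ Prod.fst ⁻¹' T) = B := by ext; simp [hj]
    rw [hpre, withDensity_apply _ hB, Set.indicator_of_mem hj, smul_eq_mul]
  · have hpre : Prod.mk j ⁻¹' (Prod.snd ⁻¹' B ∩ Prod.fst ⁻¹' T) = ∅ := by ext; simp [hj]
    rw [hpre, measure_empty, Set.indicator_of_notMem hj]; simp

section Trajectory

variable {E : Type*}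

theorem extvec_snoc_of_le {n : ℕ} (x : E) (xs : Fin n → E) (y : E) {r : ℕ} (hr : r ≤ n) :
    extvec (n + 1) x (Fin.snoc xs y) r = extvec n x xs r := by
  unfold extvec
  by_cases h : 1 ≤ r ∧ r ≤ n
  · rw [dif_pos ⟨h.1, by omega⟩, dif_pos h]
    exact Fin.snoc_castSucc (α := fun _ => E) (i := ⟨r - 1, by omega⟩) ..
  · rw [dif_neg (by omega), dif_neg h]

theorem extvec_snoc_last {n : ℕ} (x : E) (xs : Fin n → E) (y : E) :
    extvec (n + 1) x (Fin.snoc xs y) (n + 1) = y := by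
  unfold extvec
  rw [dif_pos ⟨by omega, le_rfl⟩]
  exact Fin.snoc_last (α := fun _ => E) ..

theorem prod_Icc_extvec_snoc {n : ℕ} {M : Type*} [CommMonoid M] (f : E → E → M) (x : E)
    (xs : Fin n → E) (y : E) :
    ∏ r ∈ Icc 1 (n + 1),
        f (extvec (n + 1) x (Fin.snoc xs y) (r - 1)) (extvec (n + 1) x (Fin.snoc xs y) r) =
      (∏ r ∈ Icc 1 n, f (extvec n x xs (r - 1)) (extvec n x xs r)) * f (extvec n x xs n) y := by
  rw [prod_Icc_succ_top (by omega), Nat.add_sub_cancel, extvec_snoc_of_le _ _ _ le_rfl,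
    extvec_snoc_last]
  congr 1
  refine prod_congr rfl fun r hr => ?_
  rw [extvec_snoc_of_le _ _ _ (by grind), extvec_snoc_of_le _ _ _ (mem_Icc.1 hr).2]

variable [MeasurableSpace E]

theorem measurable_extvec_apply (n : ℕ) (x : E) (r : ℕ) :
    Measurable fun xs : Fin n → E => extvec n x xs r := by
  unfold extvec
  split_ifs
  · exact measurable_pi_apply _
  · exact measurable_const

theorem lintegral_pi_fin_succ_eq_lintegral_snoc (μ : Measure E) [SigmaFinite μ] {n : ℕ}
    {F : (Fin (n + 1) → E) → ℝ≥0∞} (hF : Measurable F) :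
    ∫⁻ xs, F xs ∂(Measure.pi fun _ => μ) =
      ∫⁻ xs, ∫⁻ y, F (Fin.snoc xs y) ∂μ ∂(Measure.pi fun _ => μ) := by
  have he := (measurePreserving_piFinSuccAbove (fun _ : Fin (n + 1) => μ) (Fin.last n)).symm
  rw [← he.lintegral_comp hF]
  refine (lintegral_prod_symm' _ (hF.comp he.measurable)).trans ?_
  simp [MeasurableEquiv.piFinSuccAbove_symm_apply, Fin.snocEquiv]

theorem lintegral_prod_extvec_eq_one (μ : Measure E) [SigmaFinite μ] {f : E → E → ℝ≥0∞}
    (hf : Measurable (Function.uncurry f)) (hf_one : ∀ z, ∫⁻ y, f z y ∂μ = 1) (x : E) (n : ℕ) :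
    ∫⁻ xs, ∏ r ∈ Icc 1 n, f (extvec n x xs (r - 1)) (extvec n x xs r)
      ∂(Measure.pi fun _ : Fin n => μ) = 1 := by
  induction n with
  | zero => simp
  | succ n ih =>
    have hF : Measurable fun xs : Fin (n + 1) → E =>
        ∏ r ∈ Icc 1 (n + 1), f (extvec (n + 1) x xs (r - 1)) (extvec (n + 1) x xs r) :=
      Finset.measurable_prod _ fun r _ =>
        hf.comp ((measurable_extvec_apply _ _ _).prodMk (measurable_extvec_apply _ _ _))
    rw [lintegral_pi_fin_succ_eq_lintegral_snoc μ hF, ← ih]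
    refine lintegral_congr fun xs => ?_
    simp_rw [prod_Icc_extvec_snoc]
    rw [lintegral_const_mul _ hf.of_uncurry_left, hf_one, mul_one]

end Trajectory

section Densities

variable {E : Type*} (f0 f1 : E → E → ℝ≥0)

theorem Lfn_zero_eq_prod (n : ℕ) (xv : ℕ → E) :
    Lfn f0 f1 0 n 0 xv = ∏ r ∈ Icc 1 n, f0 (xv (r - 1)) (xv r) := by
  simp [Lfn]

theorem ellDens_of_lt {n j : ℕ} (h : n < j) (xv : ℕ → E) :
    ellDens f0 f1 n j xv = Lfn f0 f1 0 n 0 xv := by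
  rw [ellDens, if_neg (by omega), if_neg (by omega)]

variable [MeasurableSpace E] {f0 f1}

theorem lintegral_Lfn_zero_extvec (μ : Measure E) [SigmaFinite μ]
    (hf0 : Measurable (Function.uncurry f0)) (hi0 : ∀ z, ∫⁻ y, (f0 z y : ℝ≥0∞) ∂μ = 1)
    (x : E) (n : ℕ) :
    ∫⁻ xs, (Lfn f0 f1 0 n 0 (extvec n x xs) : ℝ≥0∞) ∂(Measure.pi fun _ : Fin n => μ) = 1 := by
  simp_rw [Lfn_zero_eq_prod, ENNReal.ofNNReal_finsetProd]
  exact lintegral_prod_extvec_eq_one μ (f := fun z y => (f0 z y : ℝ≥0∞))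
    hf0.coe_nnreal_ennreal hi0 x n

theorem measurable_Lfn_extvec (hf0 : Measurable (Function.uncurry f0))
    (hf1 : Measurable (Function.uncurry f1)) (k N m n : ℕ) (x : E) :
    Measurable fun xs : Fin n → E => Lfn f0 f1 k N m (extvec n x xs) := by
  have hpair (r : ℕ) := (measurable_extvec_apply n x (r - 1)).prodMk (measurable_extvec_apply n x r)
  exact (Finset.measurable_prod _ fun r _ => hf0.comp (hpair r)).mul
    (Finset.measurable_prod _ fun r _ => hf1.comp (hpair r))

theorem measurable_ellDens_extvec (hf0 : Measurable (Function.uncurry f0))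
    (hf1 : Measurable (Function.uncurry f1)) (n j : ℕ) (x : E) :
    Measurable fun xs : Fin n → E => (ellDens f0 f1 n j (extvec n x xs) : ℝ≥0∞) := by
  unfold ellDens
  split_ifs <;> exact (measurable_Lfn_extvec hf0 hf1 _ _ _ _ x).coe_nnreal_ennreal

end Densities

section Prior

variable {E : Type*} (f0 f1 : E → E → ℝ≥0) {p π : ℝ}

theorem prior_mul_coe (hp₀ : 0 ≤ p) (hp₁ : p ≤ 1) (hπ₁ : π ≤ 1) {j : ℕ} (hj : j ≠ 0)
    (a : ℝ≥0) : prior p π j * a = ENNReal.ofReal ((1 - π) * p ^ (j - 1) * (1 - p) * a) := by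
  have : 0 ≤ (1 - π) * p ^ (j - 1) * (1 - p) :=
    mul_nonneg (mul_nonneg (by linarith) (pow_nonneg hp₀ _)) (by linarith)
  rw [prior, if_neg hj, ENNReal.ofReal_mul this, ENNReal.ofReal_coe_nnreal]

theorem tsum_prior_add (hp₀ : 0 ≤ p) (hp₁ : p < 1) (hπ₁ : π ≤ 1) (n : ℕ) :
    ∑' k, prior p π (k + (n + 1)) = ENNReal.ofReal ((1 - π) * p ^ n) := by
  have hc : 0 ≤ (1 - π) * p ^ n * (1 - p) :=
    mul_nonneg (mul_nonneg (by linarith) (pow_nonneg hp₀ _)) (by linarith)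
  have hterm (k : ℕ) :
      prior p π (k + (n + 1)) = ENNReal.ofReal ((1 - π) * p ^ n * (1 - p) * p ^ k) := by
    rw [prior, if_neg (by omega), show k + (n + 1) - 1 = n + k by omega, pow_add]
    ring_nf
  simp_rw [hterm]
  rw [← ENNReal.ofReal_tsum_of_nonneg (fun k => mul_nonneg hc (pow_nonneg hp₀ k))
      ((summable_geometric_of_lt_one hp₀ hp₁).mul_left _), tsum_mul_left,
    tsum_geometric_of_lt_one hp₀ hp₁, mul_assoc, mul_inv_cancel₀ (by linarith), mul_one]

theorem tsum_prior_mul_ellDens_add (hp₀ : 0 ≤ p) (hp₁ : p < 1) (hπ₁ : π ≤ 1) (n : ℕ)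
    (xv : ℕ → E) :
    ∑' k, prior p π (k + (n + 1)) * ellDens f0 f1 n (k + (n + 1)) xv =
      ENNReal.ofReal ((1 - π) * p ^ n * Lfn f0 f1 0 n 0 xv) := by
  have hℓ (k : ℕ) : ellDens f0 f1 n (k + (n + 1)) xv = Lfn f0 f1 0 n 0 xv :=
    ellDens_of_lt f0 f1 (by omega) xv
  simp_rw [hℓ]
  rw [ENNReal.tsum_mul_right, tsum_prior_add hp₀ hp₁ hπ₁,
    ENNReal.ofReal_mul (mul_nonneg (by linarith) (pow_nonneg hp₀ n)), ENNReal.ofReal_coe_nnreal]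

theorem tsum_indicator_prior_mul_ellDens (hp₀ : 0 ≤ p) (hp₁ : p < 1) (hπ₁ : π ≤ 1)
    (n : ℕ) (xv : ℕ → E) :
    ∑' j, (Set.Ioi n).indicator (prior p π) j * ellDens f0 f1 n j xv =
      ENNReal.ofReal ((1 - π) * p ^ n * Lfn f0 f1 0 n 0 xv) := by
  rw [← ENNReal.summable.sum_add_tsum_nat_add' (k := n + 1),
    ← tsum_prior_mul_ellDens_add f0 f1 hp₀ hp₁ hπ₁, sum_eq_zero fun j hj => ?_, zero_add]
  · exact tsum_congr fun k => by rw [Set.indicator_of_mem (by simp; omega)]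
  · rw [Set.indicator_of_notMem (by simp at hj ⊢; omega), zero_mul]

theorem tsum_prior_mul_ellDens (hp₀ : 0 ≤ p) (hp₁ : p < 1) (hπ₀ : 0 ≤ π) (hπ₁ : π ≤ 1)
    (n : ℕ) (xv : ℕ → E) :
    ∑' j, prior p π j * ellDens f0 f1 n j xv = ENNReal.ofReal (Sfn f0 f1 p π n xv) := by
  have hq : 0 ≤ 1 - p := by linarith
  have hr : 0 ≤ 1 - π := by linarith
  have hmid : ∑ j ∈ Icc 1 n, prior p π j * ellDens f0 f1 n j xv = ENNReal.ofReal
      ((1 - π) * ∑ j ∈ Icc 1 n, p ^ (j - 1) * (1 - p) * Lfn f0 f1 0 n (n - j + 1) xv) := by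
    rw [mul_sum, ENNReal.ofReal_sum_of_nonneg fun j _ => by positivity]
    refine sum_congr rfl fun j hj => ?_
    rw [mem_Icc] at hj
    rw [ellDens, if_neg (by omega), if_pos hj.2, prior_mul_coe hp₀ hp₁.le hπ₁ (by omega)]
    ring_nf
  have hrange : range (n + 1) = insert 0 (Icc 1 n) := by ext j; simp; omega
  rw [← ENNReal.summable.sum_add_tsum_nat_add' (k := n + 1),
    tsum_prior_mul_ellDens_add f0 f1 hp₀ hp₁ hπ₁, hrange, sum_insert (by simp), hmid, prior,
    ellDens, if_pos rfl, if_pos rfl, ← ENNReal.ofReal_coe_nnreal, ← ENNReal.ofReal_mul hπ₀,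
    ← ENNReal.ofReal_add (by positivity) (by positivity),
    ← ENNReal.ofReal_add (by positivity) (by positivity), Sfn]
  ring_nf

end Prior

theorem stmt4_general {E : Type*} [MeasurableSpace E] (μ : Measure E) [SigmaFinite μ]
    (f0 f1 : E → E → ℝ≥0) (hf0 : Measurable (Function.uncurry f0))
    (hf1 : Measurable (Function.uncurry f1))
    (hi0 : ∀ z, ∫⁻ y, (f0 z y : ℝ≥0∞) ∂μ = 1)
    (p π : ℝ) (hp : p ∈ Set.Ioo (0 : ℝ) 1) (hπ : π ∈ Set.Ioo (0 : ℝ) 1)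
    (x : E) (n : ℕ) :
    (nuMeasure μ f0 f1 p π x n)[Set.indicator {ω : ℕ × (Fin n → E) | n < ω.1} (fun _ => (1 : ℝ)) |
        Ffil n n le_rfl]
      =ᵐ[nuMeasure μ f0 f1 p π x n] fun ω =>
        (1 - π) * p ^ n * (Lfn f0 f1 0 n 0 (extvec n x ω.2) : ℝ) /
          Sfn f0 f1 p π n (extvec n x ω.2) := by
  obtain ⟨hp₀, hp₁⟩ := hp
  obtain ⟨hπ₀, hπ₁⟩ := hπ
  have hq : 0 ≤ 1 - p := by linarith
  have hr : 0 ≤ 1 - π := by linarith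
  set P := Measure.pi fun _ : Fin n => μ
  set ℓ : ℕ → (Fin n → E) → ℝ≥0∞ := fun j xs => ellDens f0 f1 n j (extvec n x xs)
  have hℓ (j : ℕ) : Measurable (ℓ j) := measurable_ellDens_extvec hf0 hf1 n j x
  have hN (xs : Fin n → E) := tsum_indicator_prior_mul_ellDens f0 f1 hp₀.le hp₁ hπ₁.le n
    (extvec n x xs)
  have hD (xs : Fin n → E) := tsum_prior_mul_ellDens f0 f1 hp₀.le hp₁ hπ₀.le hπ₁.le n
    (extvec n x xs)
  have hN_fin : ∫⁻ xs, ∑' j, (Set.Ioi n).indicator (prior p π) j * ℓ j xs ∂P ≠ ∞ := by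
    simp_rw [ℓ, hN, ENNReal.ofReal_mul (by positivity : 0 ≤ (1 - π) * p ^ n),
      ENNReal.ofReal_coe_nnreal]
    rw [lintegral_const_mul _ (measurable_Lfn_extvec hf0 hf1 _ _ _ _ x).coe_nnreal_ennreal,
      lintegral_Lfn_zero_extvec μ hf0 hi0, mul_one]
    exact ENNReal.ofReal_ne_top
  have hmarg : (nuMeasure μ f0 f1 p π x n).map Prod.snd =
      P.withDensity fun xs => ∑' j, prior p π j * ℓ j xs := by
    have h := map_snd_restrict_sum_map_prodMk P (prior p π) hℓ MeasurableSet.univ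
    simp only [Set.preimage_univ, Measure.restrict_univ, Set.indicator_univ] at h
    exact h
  refine (condExp_indicator_fst_preimage_ae_eq_div measurableSet_Ioi
    (Measurable.tsum fun j => (hℓ j).const_mul _) (Measurable.tsum fun j => (hℓ j).const_mul _)
    (fun xs => ENNReal.tsum_le_tsum fun j => by gcongr; exact Set.indicator_le_self _ _ j)
    (fun xs => by simp only [ℓ, hD]; exact ENNReal.ofReal_ne_top) hN_fin hmarg
    (map_snd_restrict_sum_map_prodMk P (prior p π) hℓ measurableSet_Ioi)).trans
    (ae_of_all _ fun ω => ?_)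
  simp only [ℓ, hN, hD]
  rw [ENNReal.toReal_div, ENNReal.toReal_ofReal (by positivity),
    ENNReal.toReal_ofReal (by unfold Sfn; positivity)]

/-- `ν`-a.e., `ν(θ > n | 𝓕_n) = (1-π) pⁿ L₀(x, X₁, …, X_n) / S(x, X₁, …, X_n)`,
i.e. `1 - Π_n = (1-π) pⁿ L₀ / S` where `Π_n = ν(θ ≤ n | 𝓕_n)`. -/
theorem stmt4 {E : Type*} [MeasurableSpace E] (μ : Measure E) [SigmaFinite μ]
    (f0 f1 : E → E → ℝ≥0) (hf0 : Measurable (Function.uncurry f0))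
    (hf1 : Measurable (Function.uncurry f1))
    (hi0 : ∀ z, ∫⁻ y, (f0 z y : ℝ≥0∞) ∂μ = 1) (hi1 : ∀ z, ∫⁻ y, (f1 z y : ℝ≥0∞) ∂μ = 1)
    (p π : ℝ) (hp : p ∈ Set.Ioo (0 : ℝ) 1) (hπ : π ∈ Set.Ioo (0 : ℝ) 1)
    (x : E) (n : ℕ) (hn : 1 ≤ n) :
    (nuMeasure μ f0 f1 p π x n)[Set.indicator {ω : ℕ × (Fin n → E) | n < ω.1} (fun _ => (1 : ℝ)) |
        Ffil n n le_rfl]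
      =ᵐ[nuMeasure μ f0 f1 p π x n] fun ω =>
        (1 - π) * p ^ n * (Lfn f0 f1 0 n 0 (extvec n x ω.2) : ℝ) /
          Sfn f0 f1 p π n (extvec n x ω.2) :=
  stmt4_general μ f0 f1 hf0 hf1 hi0 p π hp hπ x n
end

section
/- In the change-point model below, for every k ≥ 0, ν-almost everywhere ν(θ ≤ n + k | 𝓕_n) = 1 − p^k (1 − Π_n), where Π_n := ν(θ ≤ n | 𝓕_n). Equivalently, ν(θ > n + k | 𝓕_n) = (1 − π) p^{n+k} L₀(x, X₁, …, X_n) / S(x, X₁, …, X_n) ν-almost everywhere. -/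
open MeasureTheory Finset
open scoped NNReal ENNReal

/-!
The law `ν` is a mixture: `θ = j` with weight `ρ(j)`, and given `θ = j` the observations have
density `ℓ_j`, a product of transition densities, hence of total mass one. Bayes' formula
therefore gives `ν(θ ∈ B | 𝓕_n) = ∑_{j ∈ B} ρ(j) ℓ_j / ∑_j ρ(j) ℓ_j`, and the denominator is `S`.
For `j > n` the density `ℓ_j = L₀` no longer depends on `j`, so the numerator for
`B = {j > n + k}` is the geometric tail `(1 - π) p^{n+k} L₀`. The first identity follows by
passing to complements, as `(1 - π) p^{n+k} L₀ / S = p^k (1 - Π_n)`.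
-/

theorem MeasureTheory.lintegral_pi_fin_succ_snoc {E : Type*} [MeasurableSpace E] (μ : Measure E)
    [SigmaFinite μ] {n : ℕ} {F : (Fin (n + 1) → E) → ℝ≥0∞} (hF : Measurable F) :
    ∫⁻ xs, F xs ∂Measure.pi (fun _ => μ) =
      ∫⁻ xs, ∫⁻ y, F (Fin.snoc xs y) ∂μ ∂Measure.pi (fun _ => μ) := by
  let e := MeasurableEquiv.piFinSuccAbove (fun _ : Fin (n + 1) => E) (Fin.last n)
  rw [← (measurePreserving_piFinSuccAbove (fun _ => μ) (Fin.last n)).symm.lintegral_comp hF,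
    lintegral_prod_symm (fun z => F (e.symm z)) (hF.comp e.symm.measurable).aemeasurable]
  simp [e, MeasurableEquiv.piFinSuccAbove_symm_apply, Fin.insertNthEquiv, Fin.insertNth_last']

theorem MeasureTheory.condExp_indicator_compl_ae_eq {α : Type*} {m m₀ : MeasurableSpace α}
    {μ : Measure α} [IsFiniteMeasure μ] (hm : m ≤ m₀) {s : Set α} (hs : MeasurableSet s) :
    μ[sᶜ.indicator fun _ => (1 : ℝ) | m] =ᵐ[μ]
      fun ω => 1 - μ[s.indicator fun _ => (1 : ℝ) | m] ω := by
  rw [Set.indicator_compl]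
  refine (condExp_sub (integrable_const 1) ((integrable_const 1).indicator hs) m).trans ?_
  rw [condExp_const hm]
  rfl

theorem ENNReal.tsum_indicator_lt_eq_tsum_nat_add (f : ℕ → ℝ≥0∞) (N : ℕ) :
    ∑' j, {j | N < j}.indicator f j = ∑' i, f (i + (N + 1)) := by
  rw [← ENNReal.summable.sum_add_tsum_nat_add' (k := N + 1),
    Finset.sum_eq_zero fun j hj => Set.indicator_of_notMem (by simpa using hj) f, zero_add]
  exact tsum_congr fun i => Set.indicator_of_mem (show N < i + (N + 1) by omega) f

noncomputable section Mixture

variable {X : Type*}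

def mixturePosterior (w : ℕ → ℝ≥0∞) (d : ℕ → X → ℝ≥0∞) (B : Set ℕ) (y : X) : ℝ :=
  ((∑' j, B.indicator (fun j => w j * d j y) j) / ∑' j, w j * d j y).toReal

variable {w : ℕ → ℝ≥0∞} {d : ℕ → X → ℝ≥0∞}

theorem tsum_indicator_div_tsum_le_one (B : Set ℕ) (y : X) :
    (∑' j, B.indicator (fun j => w j * d j y) j) / ∑' j, w j * d j y ≤ 1 :=
  ENNReal.div_le_of_le_mul <| by
    rw [one_mul]; exact ENNReal.tsum_le_tsum (Set.indicator_le_self _ _)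

theorem mixturePosterior_mem_Icc (B : Set ℕ) (y : X) :
    mixturePosterior w d B y ∈ Set.Icc 0 1 :=
  ⟨ENNReal.toReal_nonneg, ENNReal.toReal_le_of_le_ofReal zero_le_one
    (ENNReal.ofReal_one ▸ tsum_indicator_div_tsum_le_one B y)⟩

theorem tsum_mul_ofReal_mixturePosterior (B : Set ℕ) {y : X} (hy : ∑' j, w j * d j y ≠ ∞) :
    (∑' j, w j * d j y) * ENNReal.ofReal (mixturePosterior w d B y) =
      ∑' j, B.indicator (fun j => w j * d j y) j := by
  have hle : ∑' j, B.indicator (fun j => w j * d j y) j ≤ ∑' j, w j * d j y :=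
    ENNReal.tsum_le_tsum (Set.indicator_le_self _ _)
  rw [mixturePosterior, ENNReal.ofReal_toReal
    ((tsum_indicator_div_tsum_le_one B y).trans_lt ENNReal.one_lt_top).ne]
  exact ENNReal.mul_div_cancel' (fun h => le_antisymm (h ▸ hle) bot_le) (fun h => absurd h hy)

variable [MeasurableSpace X]

def mixtureMeasure (m : Measure X) (w : ℕ → ℝ≥0∞) (d : ℕ → X → ℝ≥0∞) : Measure (ℕ × X) :=
  Measure.sum fun j => w j • Measure.map (fun y => (j, y)) (m.withDensity (d j))

variable {m : Measure X}

theorem lintegral_mixtureMeasure (hd : ∀ j, Measurable (d j)) {F : ℕ × X → ℝ≥0∞}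
    (hF : Measurable F) :
    ∫⁻ ω, F ω ∂mixtureMeasure m w d = ∑' j, w j * ∫⁻ y, d j y * F (j, y) ∂m := by
  rw [mixtureMeasure, lintegral_sum_measure]
  refine tsum_congr fun j => ?_
  rw [lintegral_smul_measure, lintegral_map hF measurable_prodMk_left, smul_eq_mul,
    lintegral_withDensity_eq_lintegral_mul _ (hd j)
      (show Measurable fun y => F (j, y) from hF.comp measurable_prodMk_left)]
  rfl

theorem lintegral_mixtureMeasure_eq_lintegral_tsum (hd : ∀ j, Measurable (d j))
    {F : ℕ × X → ℝ≥0∞} (hF : Measurable F) :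
    ∫⁻ ω, F ω ∂mixtureMeasure m w d = ∫⁻ y, ∑' j, w j * d j y * F (j, y) ∂m := by
  have hF' (j : ℕ) : Measurable fun y => d j y * F (j, y) :=
    (hd j).mul (hF.comp measurable_prodMk_left)
  simp_rw [lintegral_mixtureMeasure hd hF, mul_assoc,
    lintegral_tsum fun j => ((hF' j).const_mul (w j)).aemeasurable]
  exact tsum_congr fun j => (lintegral_const_mul _ (hF' j)).symm

theorem measurable_mixturePosterior (hd : ∀ j, Measurable (d j)) (B : Set ℕ) :
    Measurable (mixturePosterior w d B) := by
  refine (Measurable.div ?_ ?_).ennreal_toReal <;> refine Measurable.tsum fun j => ?_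
  · by_cases hj : j ∈ B <;> simp [hj, (hd j).const_mul]
  · exact (hd j).const_mul _

theorem setLIntegral_preimage_snd_mixtureMeasure (hd : ∀ j, Measurable (d j)) {A : Set X}
    (hA : MeasurableSet A) {F : ℕ × X → ℝ≥0∞} (hF : Measurable F) :
    ∫⁻ ω in Prod.snd ⁻¹' A, F ω ∂mixtureMeasure m w d =
      ∫⁻ y in A, ∑' j, w j * d j y * F (j, y) ∂m := by
  rw [← lintegral_indicator (measurable_snd hA), ← lintegral_indicator hA,
    lintegral_mixtureMeasure_eq_lintegral_tsum hd (hF.indicator (measurable_snd hA))]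
  refine lintegral_congr fun y => ?_
  by_cases hy : y ∈ A <;> simp [hy]

theorem condExp_indicator_fst_mixtureMeasure [IsFiniteMeasure (mixtureMeasure m w d)]
    (hd : ∀ j, Measurable (d j)) (B : Set ℕ) :
    (mixtureMeasure m w d)[(Prod.fst ⁻¹' B).indicator (fun _ => (1 : ℝ)) |
        MeasurableSpace.comap Prod.snd ‹MeasurableSpace X›]
      =ᵐ[mixtureMeasure m w d] fun ω => mixturePosterior w d B ω.2 := by
  have hB : MeasurableSet (Prod.fst ⁻¹' B : Set (ℕ × X)) := measurable_fst .of_discrete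
  have hpost : Measurable fun ω : ℕ × X => mixturePosterior w d B ω.2 :=
    (measurable_mixturePosterior hd B).comp measurable_snd
  -- the total density has integral `ν univ < ∞`, so the posterior can be cancelled against it
  have hden_fin : ∀ᵐ y ∂m, ∑' j, w j * d j y < ∞ := by
    refine ae_lt_top (Measurable.tsum fun j => (hd j).const_mul _) ?_
    have := lintegral_mixtureMeasure_eq_lintegral_tsum (m := m) (w := w) hd measurable_const
      (F := fun _ => 1)
    simp only [mul_one, lintegral_const, one_mul] at this
    exact this ▸ measure_ne_top _ Set.univ
  have hpost_int :
      Integrable (fun ω : ℕ × X => mixturePosterior w d B ω.2) (mixtureMeasure m w d) := by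
    refine Integrable.of_bound hpost.aestronglyMeasurable 1 (ae_of_all _ fun ω => ?_)
    have := mixturePosterior_mem_Icc (w := w) (d := d) B ω.2
    rw [Real.norm_of_nonneg this.1]; exact this.2
  refine (ae_eq_condExp_of_forall_setIntegral_eq measurable_snd.comap_le
    ((integrable_const 1).indicator hB) (fun s _ _ => hpost_int.integrableOn) ?_
    ((measurable_mixturePosterior hd B).comp
      (comap_measurable Prod.snd)).aestronglyMeasurable).symm
  rintro _ ⟨A, hA, rfl⟩ -
  have hind : Measurable ((Prod.fst ⁻¹' B).indicator fun _ : ℕ × X => (1 : ℝ)) :=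
    measurable_const.indicator hB
  rw [integral_eq_lintegral_of_nonneg_ae (f := fun ω : ℕ × X => mixturePosterior w d B ω.2)
      (ae_of_all _ fun ω => (mixturePosterior_mem_Icc B ω.2).1) hpost.aestronglyMeasurable,
    integral_eq_lintegral_of_nonneg_ae (f := (Prod.fst ⁻¹' B).indicator fun _ => (1 : ℝ))
      (ae_of_all _ (Set.indicator_nonneg fun _ _ => zero_le_one)) hind.aestronglyMeasurable,
    setLIntegral_preimage_snd_mixtureMeasure hd hA hpost.ennreal_ofReal,
    setLIntegral_preimage_snd_mixtureMeasure hd hA hind.ennreal_ofReal]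
  refine congrArg _ (setLIntegral_congr_fun_ae hA (hden_fin.mono fun y hy _ => ?_))
  dsimp only
  rw [ENNReal.tsum_mul_right, tsum_mul_ofReal_mixturePosterior B hy.ne]
  refine tsum_congr fun j => ?_
  by_cases hj : j ∈ B <;> simp [hj]

end Mixture

namespace ChangePoint

variable {E : Type*}

def chainDensity (g : ℕ → E → E → ℝ≥0) (n : ℕ) (xv : ℕ → E) : ℝ≥0 :=
  ∏ r ∈ Finset.Icc 1 n, g r (xv (r - 1)) (xv r)

theorem extvec_snoc_of_le {n : ℕ} {x : E} (xs : Fin n → E) (y : E) {r : ℕ} (hr : r ≤ n) :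
    extvec (n + 1) x (Fin.snoc xs y) r = extvec n x xs r := by
  unfold extvec
  by_cases h : 1 ≤ r ∧ r ≤ n
  · rw [dif_pos ⟨h.1, h.2.trans n.le_succ⟩, dif_pos h]
    exact Fin.snoc_castSucc (i := ⟨r - 1, by omega⟩) ..
  · rw [dif_neg (by omega), dif_neg h]

theorem extvec_snoc_self {n : ℕ} {x : E} (xs : Fin n → E) (y : E) :
    extvec (n + 1) x (Fin.snoc xs y) (n + 1) = y := by
  rw [extvec, dif_pos ⟨by omega, le_rfl⟩]
  exact Fin.snoc_last (α := fun _ => E) (p := xs) (x := y)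

theorem chainDensity_extvec_snoc (g : ℕ → E → E → ℝ≥0) {n : ℕ} {x : E} (xs : Fin n → E)
    (y : E) :
    chainDensity g (n + 1) (extvec (n + 1) x (Fin.snoc xs y)) =
      chainDensity g n (extvec n x xs) * g (n + 1) (extvec n x xs n) y := by
  rw [chainDensity, Finset.prod_Icc_succ_top (by omega), chainDensity, Nat.add_sub_cancel,
    extvec_snoc_of_le xs y le_rfl, extvec_snoc_self]
  congr 1
  refine Finset.prod_congr rfl fun r hr => ?_
  have := (Finset.mem_Icc.mp hr).2
  rw [extvec_snoc_of_le xs y (by omega), extvec_snoc_of_le xs y this]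

theorem Lfn_zero_eq_chainDensity (f0 f1 : E → E → ℝ≥0) (N m : ℕ) (xv : ℕ → E) :
    Lfn f0 f1 0 N m xv = chainDensity (fun r => if r ≤ N - m then f0 else f1) N xv := by
  have hsplit : Finset.Icc 1 N = Finset.Icc 1 (N - m) ∪ Finset.Icc (N - m + 1) N := by
    ext r; simp only [Finset.mem_Icc, Finset.mem_union]; omega
  have hdisj : Disjoint (Finset.Icc 1 (N - m)) (Finset.Icc (N - m + 1) N) :=
    Finset.disjoint_left.mpr fun r h1 h2 => by
      simp only [Finset.mem_Icc] at h1 h2; omega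
  rw [chainDensity, hsplit, Finset.prod_union hdisj, Lfn]
  congr 1 <;> refine Finset.prod_congr rfl fun r hr => ?_ <;>
    simp only [Finset.mem_Icc] at hr
  · rw [if_pos hr.2]
  · rw [if_neg (by omega)]

theorem ellDens_of_lt (f0 f1 : E → E → ℝ≥0) {n j : ℕ} (h : n < j) (xv : ℕ → E) :
    ellDens f0 f1 n j xv = Lfn f0 f1 0 n 0 xv := by
  rw [ellDens, if_neg (by omega), if_neg (by omega)]

def priorWeight (p π : ℝ) (j : ℕ) : ℝ :=
  if j = 0 then π else (1 - π) * p ^ (j - 1) * (1 - p)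

theorem prior_eq_ofReal_priorWeight (p π : ℝ) (j : ℕ) :
    prior p π j = ENNReal.ofReal (priorWeight p π j) := by
  unfold prior priorWeight
  split_ifs <;> rfl

variable {p π : ℝ}

theorem priorWeight_nonneg (hp : p ∈ Set.Ico 0 1) (hπ : π ∈ Set.Icc 0 1) (j : ℕ) :
    0 ≤ priorWeight p π j := by
  unfold priorWeight
  split_ifs
  exacts [hπ.1, mul_nonneg (mul_nonneg (sub_nonneg.2 hπ.2) (pow_nonneg hp.1 _))
    (sub_nonneg.2 hp.2.le)]

theorem tsum_prior_nat_add (hp : p ∈ Set.Ico 0 1) (hπ : π ∈ Set.Icc 0 1) (N : ℕ) :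
    ∑' i, prior p π (i + (N + 1)) = ENNReal.ofReal ((1 - π) * p ^ N) := by
  have hterm (i : ℕ) :
      prior p π (i + (N + 1)) = ENNReal.ofReal (priorWeight p π (N + 1) * p ^ i) := by
    rw [prior_eq_ofReal_priorWeight, priorWeight, priorWeight, if_neg (by omega),
      if_neg (by omega), show i + (N + 1) - 1 = N + i by omega, Nat.add_sub_cancel, pow_add]
    congr 1
    ring
  rw [tsum_congr hterm, ← ENNReal.ofReal_tsum_of_nonneg
      (fun i => mul_nonneg (priorWeight_nonneg hp hπ (N + 1)) (pow_nonneg hp.1 i))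
      ((summable_geometric_of_lt_one hp.1 hp.2).mul_left _),
    tsum_mul_left, tsum_geometric_of_lt_one hp.1 hp.2, priorWeight, if_neg N.succ_ne_zero,
    Nat.add_sub_cancel, mul_inv_cancel_right₀ (sub_pos.2 hp.2).ne']

theorem tsum_prior (hp : p ∈ Set.Ico 0 1) (hπ : π ∈ Set.Icc 0 1) : ∑' j, prior p π j = 1 := by
  rw [← ENNReal.summable.sum_add_tsum_nat_add' (k := 1), tsum_prior_nat_add hp hπ 0,
    Finset.sum_range_one, prior_eq_ofReal_priorWeight, priorWeight, if_pos rfl, pow_zero, mul_one,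
    ← ENNReal.ofReal_add hπ.1 (sub_nonneg.2 hπ.2), add_sub_cancel, ENNReal.ofReal_one]

theorem Sfn_eq_sum_add (f0 f1 : E → E → ℝ≥0) (p π : ℝ) (n : ℕ) (xv : ℕ → E) :
    Sfn f0 f1 p π n xv = ∑ j ∈ Finset.range (n + 1), priorWeight p π j * ellDens f0 f1 n j xv +
      (1 - π) * p ^ n * Lfn f0 f1 0 n 0 xv := by
  have hrange : Finset.range (n + 1) = insert 0 (Finset.Icc 1 n) := by
    ext j; simp only [Finset.mem_range, Finset.mem_insert, Finset.mem_Icc]; omega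
  have hterm : ∀ j ∈ Finset.Icc 1 n, priorWeight p π j * ellDens f0 f1 n j xv =
      (1 - π) * (p ^ (j - 1) * (1 - p) * Lfn f0 f1 0 n (n - j + 1) xv) := fun j hj => by
    have := Finset.mem_Icc.mp hj
    rw [priorWeight, ellDens, if_neg (by omega), if_neg (by omega), if_pos this.2]
    ring
  rw [hrange, Finset.sum_insert (by simp), Finset.sum_congr rfl hterm, ← Finset.mul_sum, Sfn,
    priorWeight, ellDens, if_pos rfl, if_pos rfl]
  ring

theorem one_sub_mul_pow_mul_nonneg (hp : p ∈ Set.Ico 0 1) (hπ : π ∈ Set.Icc 0 1) {c : ℝ≥0}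
    {N : ℕ} :
    0 ≤ (1 - π) * p ^ N * (c : ℝ) :=
  mul_nonneg (mul_nonneg (sub_nonneg.2 hπ.2) (pow_nonneg hp.1 N)) c.2

theorem Sfn_nonneg (f0 f1 : E → E → ℝ≥0) (hp : p ∈ Set.Ico 0 1) (hπ : π ∈ Set.Icc 0 1) (n : ℕ)
    (xv : ℕ → E) : 0 ≤ Sfn f0 f1 p π n xv := by
  rw [Sfn_eq_sum_add]
  exact add_nonneg
    (Finset.sum_nonneg fun j _ => mul_nonneg (priorWeight_nonneg hp hπ j) (ellDens ..).2)
    (one_sub_mul_pow_mul_nonneg hp hπ)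

variable {f0 f1 : E → E → ℝ≥0} {n : ℕ}

theorem tsum_prior_mul_ellDens_nat_add (hp : p ∈ Set.Ico 0 1) (hπ : π ∈ Set.Icc 0 1) {N : ℕ}
    (hN : n ≤ N) (xv : ℕ → E) :
    ∑' i, prior p π (i + (N + 1)) * ellDens f0 f1 n (i + (N + 1)) xv =
      ENNReal.ofReal ((1 - π) * p ^ N * Lfn f0 f1 0 n 0 xv) := by
  have hdens (i : ℕ) : ellDens f0 f1 n (i + (N + 1)) xv = Lfn f0 f1 0 n 0 xv :=
    ellDens_of_lt f0 f1 (by omega) xv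
  rw [tsum_congr fun i => congrArg _ (congrArg ENNReal.ofNNReal (hdens i)),
    ENNReal.tsum_mul_right, tsum_prior_nat_add hp hπ,
    ENNReal.ofReal_mul (mul_nonneg (sub_nonneg.2 hπ.2) (pow_nonneg hp.1 N)),
    ENNReal.ofReal_coe_nnreal]

theorem tsum_indicator_lt_prior_mul_ellDens (hp : p ∈ Set.Ico 0 1) (hπ : π ∈ Set.Icc 0 1)
    {N : ℕ} (hN : n ≤ N) (xv : ℕ → E) :
    ∑' j, {j | N < j}.indicator (fun j => prior p π j * ellDens f0 f1 n j xv) j =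
      ENNReal.ofReal ((1 - π) * p ^ N * Lfn f0 f1 0 n 0 xv) := by
  rw [ENNReal.tsum_indicator_lt_eq_tsum_nat_add, tsum_prior_mul_ellDens_nat_add hp hπ hN]

theorem tsum_prior_mul_ellDens (hp : p ∈ Set.Ico 0 1) (hπ : π ∈ Set.Icc 0 1) (xv : ℕ → E) :
    ∑' j, prior p π j * ellDens f0 f1 n j xv = ENNReal.ofReal (Sfn f0 f1 p π n xv) := by
  have hweight (j : ℕ) : 0 ≤ priorWeight p π j * ellDens f0 f1 n j xv :=
    mul_nonneg (priorWeight_nonneg hp hπ j) (ellDens f0 f1 n j xv).2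
  rw [← ENNReal.summable.sum_add_tsum_nat_add' (k := n + 1),
    tsum_prior_mul_ellDens_nat_add hp hπ le_rfl, Sfn_eq_sum_add,
    ENNReal.ofReal_add (Finset.sum_nonneg fun j _ => hweight j)
      (one_sub_mul_pow_mul_nonneg hp hπ),
    ENNReal.ofReal_sum_of_nonneg fun j _ => hweight j]
  refine congrArg (· + _) (Finset.sum_congr rfl fun j _ => ?_)
  rw [prior_eq_ofReal_priorWeight, ENNReal.ofReal_mul (priorWeight_nonneg hp hπ j),
    ENNReal.ofReal_coe_nnreal]

variable [MeasurableSpace E] {g : ℕ → E → E → ℝ≥0}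

theorem measurable_extvec (n : ℕ) (x : E) (r : ℕ) :
    Measurable fun xs : Fin n → E => extvec n x xs r := by
  unfold extvec
  split_ifs
  exacts [measurable_pi_apply _, measurable_const]

theorem measurable_chainDensity_extvec (hg : ∀ r, Measurable (Function.uncurry (g r)))
    (n : ℕ) (x : E) : Measurable fun xs : Fin n → E => chainDensity g n (extvec n x xs) :=
  Finset.measurable_prod _ fun r _ =>
    (hg r).comp ((measurable_extvec n x (r - 1)).prodMk (measurable_extvec n x r))

theorem lintegral_chainDensity_extvec (μ : Measure E) [SigmaFinite μ]
    (hg : ∀ r, Measurable (Function.uncurry (g r))) (hgi : ∀ r z, ∫⁻ y, (g r z y : ℝ≥0∞) ∂μ = 1)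
    (n : ℕ) (x : E) :
    ∫⁻ xs, (chainDensity g n (extvec n x xs) : ℝ≥0∞) ∂Measure.pi (fun _ : Fin n => μ) = 1 := by
  induction n with
  | zero => simp [chainDensity]
  | succ n ih =>
    rw [lintegral_pi_fin_succ_snoc μ (measurable_chainDensity_extvec hg _ x).coe_nnreal_ennreal,
      ← ih]
    refine lintegral_congr fun xs => ?_
    simp_rw [chainDensity_extvec_snoc, ENNReal.coe_mul]
    rw [lintegral_const_mul _ (hg _).of_uncurry_left.coe_nnreal_ennreal, hgi, mul_one]

theorem measurable_ellDens (hf0 : Measurable (Function.uncurry f0))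
    (hf1 : Measurable (Function.uncurry f1)) (n j : ℕ) (x : E) :
    Measurable fun xs : Fin n → E => (ellDens f0 f1 n j (extvec n x xs) : ℝ≥0∞) := by
  unfold ellDens
  split_ifs <;> simp_rw [Lfn_zero_eq_chainDensity] <;>
    refine (measurable_chainDensity_extvec (fun r => ?_) n x).coe_nnreal_ennreal <;>
    split_ifs <;> assumption

theorem lintegral_ellDens (μ : Measure E) [SigmaFinite μ]
    (hf0 : Measurable (Function.uncurry f0)) (hf1 : Measurable (Function.uncurry f1))
    (hi0 : ∀ z, ∫⁻ y, (f0 z y : ℝ≥0∞) ∂μ = 1) (hi1 : ∀ z, ∫⁻ y, (f1 z y : ℝ≥0∞) ∂μ = 1)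
    (n j : ℕ) (x : E) :
    ∫⁻ xs, (ellDens f0 f1 n j (extvec n x xs) : ℝ≥0∞) ∂Measure.pi (fun _ : Fin n => μ) = 1 := by
  unfold ellDens
  split_ifs <;> simp_rw [Lfn_zero_eq_chainDensity] <;>
    exact lintegral_chainDensity_extvec μ (fun r => by split_ifs <;> assumption)
      (fun r => by split_ifs <;> assumption) n x

theorem nuMeasure_eq_mixtureMeasure (μ : Measure E) (p π : ℝ) (x : E) (n : ℕ) :
    nuMeasure μ f0 f1 p π x n = mixtureMeasure (Measure.pi fun _ : Fin n => μ) (prior p π)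
      (fun j xs => ellDens f0 f1 n j (extvec n x xs)) := rfl

theorem isProbabilityMeasure_nuMeasure (μ : Measure E) [SigmaFinite μ]
    (hf0 : Measurable (Function.uncurry f0)) (hf1 : Measurable (Function.uncurry f1))
    (hi0 : ∀ z, ∫⁻ y, (f0 z y : ℝ≥0∞) ∂μ = 1) (hi1 : ∀ z, ∫⁻ y, (f1 z y : ℝ≥0∞) ∂μ = 1)
    (hp : p ∈ Set.Ico 0 1) (hπ : π ∈ Set.Icc 0 1) (x : E) (n : ℕ) :
    IsProbabilityMeasure (nuMeasure μ f0 f1 p π x n) := by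
  constructor
  rw [← setLIntegral_one, Measure.restrict_univ, nuMeasure_eq_mixtureMeasure,
    lintegral_mixtureMeasure (measurable_ellDens hf0 hf1 n · x) measurable_const]
  simp_rw [mul_one, lintegral_ellDens μ hf0 hf1 hi0 hi1, mul_one]
  exact tsum_prior hp hπ

theorem condExp_indicator_lt_ae_eq (μ : Measure E) [SigmaFinite μ]
    (hf0 : Measurable (Function.uncurry f0)) (hf1 : Measurable (Function.uncurry f1))
    (hi0 : ∀ z, ∫⁻ y, (f0 z y : ℝ≥0∞) ∂μ = 1) (hi1 : ∀ z, ∫⁻ y, (f1 z y : ℝ≥0∞) ∂μ = 1)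
    (hp : p ∈ Set.Ico 0 1) (hπ : π ∈ Set.Icc 0 1) (x : E) {N : ℕ} (hN : n ≤ N) :
    (nuMeasure μ f0 f1 p π x n)[{ω : ℕ × (Fin n → E) | N < ω.1}.indicator (fun _ => (1 : ℝ)) |
        Ffil n n le_rfl]
      =ᵐ[nuMeasure μ f0 f1 p π x n] fun ω =>
        (1 - π) * p ^ N * (Lfn f0 f1 0 n 0 (extvec n x ω.2) : ℝ) /
          Sfn f0 f1 p π n (extvec n x ω.2) := by
  have hν := isProbabilityMeasure_nuMeasure μ hf0 hf1 hi0 hi1 hp hπ x n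
  rw [nuMeasure_eq_mixtureMeasure] at hν ⊢
  refine (condExp_indicator_fst_mixtureMeasure (measurable_ellDens hf0 hf1 n · x)
    {j | N < j}).trans (ae_of_all _ fun ω => ?_)
  dsimp only [mixturePosterior]
  rw [tsum_indicator_lt_prior_mul_ellDens hp hπ hN, tsum_prior_mul_ellDens hp hπ,
    ENNReal.toReal_div, ENNReal.toReal_ofReal (one_sub_mul_pow_mul_nonneg hp hπ),
    ENNReal.toReal_ofReal (Sfn_nonneg f0 f1 hp hπ n _)]

end ChangePoint

theorem stmt5_general {E : Type*} [MeasurableSpace E] (μ : Measure E) [SigmaFinite μ]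
    (f0 f1 : E → E → ℝ≥0) (hf0 : Measurable (Function.uncurry f0))
    (hf1 : Measurable (Function.uncurry f1))
    (hi0 : ∀ z, ∫⁻ y, (f0 z y : ℝ≥0∞) ∂μ = 1) (hi1 : ∀ z, ∫⁻ y, (f1 z y : ℝ≥0∞) ∂μ = 1)
    (p π : ℝ) (hp : p ∈ Set.Ioo (0 : ℝ) 1) (hπ : π ∈ Set.Ioo (0 : ℝ) 1)
    (x : E) (n : ℕ) (k : ℕ) :
    ((nuMeasure μ f0 f1 p π x n)[Set.indicator {ω : ℕ × (Fin n → E) | ω.1 ≤ n + k}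
          (fun _ => (1 : ℝ)) | Ffil n n le_rfl]
        =ᵐ[nuMeasure μ f0 f1 p π x n] fun ω =>
          1 - p ^ k *
            (1 - ((nuMeasure μ f0 f1 p π x n)[Set.indicator {ω' : ℕ × (Fin n → E) | ω'.1 ≤ n}
              (fun _ => (1 : ℝ)) | Ffil n n le_rfl]) ω)) ∧
      (nuMeasure μ f0 f1 p π x n)[Set.indicator {ω : ℕ × (Fin n → E) | n + k < ω.1}
          (fun _ => (1 : ℝ)) | Ffil n n le_rfl]
        =ᵐ[nuMeasure μ f0 f1 p π x n] fun ω =>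
          (1 - π) * p ^ (n + k) * (Lfn f0 f1 0 n 0 (extvec n x ω.2) : ℝ) /
            Sfn f0 f1 p π n (extvec n x ω.2) := by
  replace hp := Set.Ioo_subset_Ico_self hp
  replace hπ := Set.Ioo_subset_Icc_self hπ
  have := ChangePoint.isProbabilityMeasure_nuMeasure μ hf0 hf1 hi0 hi1 hp hπ x n
  have tail (N : ℕ) (hN : n ≤ N) :=
    ChangePoint.condExp_indicator_lt_ae_eq μ hf0 hf1 hi0 hi1 hp hπ x hN
  have hcompl (N : ℕ) :=
    condExp_indicator_compl_ae_eq (μ := nuMeasure μ f0 f1 p π x n) (m := Ffil n n le_rfl)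
      (s := {ω | N < ω.1}) measurable_snd.comap_le (measurable_fst measurableSet_Ioi)
  have hle (N : ℕ) : {ω : ℕ × (Fin n → E) | ω.1 ≤ N} = {ω | N < ω.1}ᶜ := by
    ext; simp
  refine ⟨?_, tail (n + k) (by omega)⟩
  rw [hle, hle]
  filter_upwards [hcompl (n + k), hcompl n, tail (n + k) (by omega), tail n le_rfl]
    with ω h1 h2 h3 h4
  rw [h1, h2, h3, h4, pow_add]
  ring

/-- For every `k ≥ 0`, `ν`-a.e.
`ν(θ ≤ n + k | 𝓕_n) = 1 - p^k (1 - Π_n)` where `Π_n = ν(θ ≤ n | 𝓕_n)`; equivalently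
`ν(θ > n + k | 𝓕_n) = (1-π) p^{n+k} L₀(x, X₁, …, X_n) / S(x, X₁, …, X_n)` `ν`-a.e. -/
theorem stmt5 {E : Type*} [MeasurableSpace E] (μ : Measure E) [SigmaFinite μ]
    (f0 f1 : E → E → ℝ≥0) (hf0 : Measurable (Function.uncurry f0))
    (hf1 : Measurable (Function.uncurry f1))
    (hi0 : ∀ z, ∫⁻ y, (f0 z y : ℝ≥0∞) ∂μ = 1) (hi1 : ∀ z, ∫⁻ y, (f1 z y : ℝ≥0∞) ∂μ = 1)
    (p π : ℝ) (hp : p ∈ Set.Ioo (0 : ℝ) 1) (hπ : π ∈ Set.Ioo (0 : ℝ) 1)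
    (x : E) (n : ℕ) (hn : 1 ≤ n) (k : ℕ) :
    ((nuMeasure μ f0 f1 p π x n)[Set.indicator {ω : ℕ × (Fin n → E) | ω.1 ≤ n + k}
          (fun _ => (1 : ℝ)) | Ffil n n le_rfl]
        =ᵐ[nuMeasure μ f0 f1 p π x n] fun ω =>
          1 - p ^ k *
            (1 - ((nuMeasure μ f0 f1 p π x n)[Set.indicator {ω' : ℕ × (Fin n → E) | ω'.1 ≤ n}
              (fun _ => (1 : ℝ)) | Ffil n n le_rfl]) ω)) ∧
      (nuMeasure μ f0 f1 p π x n)[Set.indicator {ω : ℕ × (Fin n → E) | n + k < ω.1}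
          (fun _ => (1 : ℝ)) | Ffil n n le_rfl]
        =ᵐ[nuMeasure μ f0 f1 p π x n] fun ω =>
          (1 - π) * p ^ (n + k) * (Lfn f0 f1 0 n 0 (extvec n x ω.2) : ℝ) /
            Sfn f0 f1 p π n (extvec n x ω.2) :=
  stmt5_general μ f0 f1 hf0 hf1 hi0 hi1 p π hp hπ x n k
end
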